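/- Let M be a popular matching of a marriage instance G = (A ∪ B, E) with witness α ∈ {0, ±1}^(A ∪ B), and assume α_a + α_b = 0 for every edge (a,b) ∈ M. Let A_0, B_0 be the vertices with α-value 0, let A_1, B_1 (resp. A_{−1}, B_{−1}) be the vertices with α-value 1 (resp. −1), let M_0 = {(a,b) ∈ M : α_a = α_b = 0}, M_1 = M ∖ M_0, and let G_1 be the subgraph of G induced on (A ∖ A_0) ∪ (B ∖ B_0). Let S be the stable matching of G_1 computed by the Gale–Shapley algorithm started from the matching M_1 ∩ (A_{−1} × B_1). Then N = M_0 ∪ S is a stable matching of G. -/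

import Mathlib

/-!
Started from `M₁ ∩ (A₋₁ × B₁)`, the Gale–Shapley run only lets women trade up, so every woman of
`B₁` ends at least as well off as in `M`, and an edge of `G₁` can block `S` only at a man who
still holds his starting partner, hence lies in `A₋₁` and keeps his `M`-partner. The witness
gives a second guarantee: a woman of `B₋₁` prefers to her `M`-partner only men of `A₁` who prefer
their own `M`-partner to her, so, inductively along the run, no man of `A₁` is ever pushed
below his `M`-partner. Thus every vertex of value `0` or `1` is at least as well off in `N` as in `M`.

Let `(a, b)` block `N`; if it lies in `G₁`, then `a ∈ A₋₁` keeps his `M`-partner. If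
`α_a + α_b < 0`, the witness makes both prefer their `M`-situation to each other, although one of
them (of value `0`, or `a`) is at least as well off in `N`. Otherwise both are at least as well
off in `N` (`α_b = -1` would force `α_a = 1`), so `(a, b)` blocks `M` and the witness forces
`α_a = α_b = 1`, contradicting `a ∈ A₋₁`.
-/

open scoped Classical

namespace PopMatch

/-- A marriage/roommates instance: a vertex set with a bipartition `A`/`B`
(ignored for roommates instances) and, for each vertex, a strict preference
list over its neighbors (most preferred first).  Adjacency is given by mutual
membership in the preference lists. -/
structure Inst (V : Type*) where
  A : Finset V
  B : Finset V
  plist : V → List V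

namespace Inst

variable {V : Type*} [DecidableEq V] [Fintype V]

/-- `u` and `v` are adjacent. -/
def adj (I : Inst V) (u v : V) : Prop := v ∈ I.plist u ∧ u ∈ I.plist v

/-- `u` (strictly) prefers `v` to `w`. -/
def pref (I : Inst V) (u v w : V) : Prop :=
  v ∈ I.plist u ∧ w ∈ I.plist u ∧ (I.plist u).idxOf v < (I.plist u).idxOf w

/-- Well-formedness of an instance as a marriage instance: preference lists are
duplicate-free and symmetric, and the graph is bipartite with parts `A`, `B`. -/
def IsValid (I : Inst V) : Prop :=
  (∀ v, (I.plist v).Nodup) ∧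
  (∀ u v, v ∈ I.plist u ↔ u ∈ I.plist v) ∧
  Disjoint I.A I.B ∧
  (∀ v : V, v ∈ I.A ∨ v ∈ I.B) ∧
  (∀ u v, v ∈ I.plist u → ((u ∈ I.A ∧ v ∈ I.B) ∨ (u ∈ I.B ∧ v ∈ I.A)))

/-- A matching, encoded by its partner function. -/
def IsMatching (I : Inst V) (p : V → Option V) : Prop :=
  (∀ u v, p u = some v → p v = some u) ∧ (∀ u v, p u = some v → I.adj u v)

/-- The number of matched vertices (twice the number of edges of the matching). -/
def msize (p : V → Option V) : ℕ := (Finset.univ.filter fun u => (p u).isSome).card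

/-- Vertex `u` prefers matching `p` to matching `q`. -/
def PrefM (I : Inst V) (p q : V → Option V) (u : V) : Prop :=
  match p u, q u with
  | some _, none => True
  | some v, some w => I.pref u v w
  | none, _ => False

/-- `phi p q` = number of vertices preferring `p` to `q`. -/
noncomputable def phi (I : Inst V) (p q : V → Option V) : ℕ :=
  (Finset.univ.filter fun u => I.PrefM p q u).card

/-- `delta p q = phi p q - phi q p`. -/
noncomputable def delta (I : Inst V) (p q : V → Option V) : ℤ :=
  (I.phi p q : ℤ) - (I.phi q p : ℤ)

/-- A popular matching: it never loses a head-to-head election. -/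
def Popular (I : Inst V) (p : V → Option V) : Prop :=
  I.IsMatching p ∧ ∀ q, I.IsMatching q → 0 ≤ I.delta p q

/-- A dominant matching: a popular matching that beats every larger matching. -/
def Dominant (I : Inst V) (p : V → Option V) : Prop :=
  I.Popular p ∧ ∀ q, I.IsMatching q → msize p < msize q → 0 < I.delta p q

/-- A maximum-size popular matching. -/
def MaxPopular (I : Inst V) (p : V → Option V) : Prop :=
  I.Popular p ∧ ∀ q, I.Popular q → msize q ≤ msize p

/-- A minimum-size popular matching. -/
def MinPopular (I : Inst V) (p : V → Option V) : Prop :=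
  I.Popular p ∧ ∀ q, I.Popular q → msize p ≤ msize q

/-- `u` prefers `v` to its situation in the matching `p`
(an unmatched vertex prefers any neighbor to being unmatched). -/
def PrefOver (I : Inst V) (p : V → Option V) (u v : V) : Prop :=
  match p u with
  | none => True
  | some w => I.pref u v w

/-- The edge `(u,v)` blocks the matching `p`. -/
def Blocks (I : Inst V) (p : V → Option V) (u v : V) : Prop :=
  I.adj u v ∧ p u ≠ some v ∧ I.PrefOver p u v ∧ I.PrefOver p v u

/-- A stable matching: a matching with no blocking edge. -/
def Stable (I : Inst V) (p : V → Option V) : Prop :=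
  I.IsMatching p ∧ ∀ u v, ¬ I.Blocks p u v

/-- Adjacency in the subgraph `G_M` obtained by deleting the edges
labeled `(-,-)` with respect to the matching `p`. -/
def GMAdj (I : Inst V) (p : V → Option V) (u v : V) : Prop :=
  I.adj u v ∧ (p u = some v ∨ I.PrefOver p u v ∨ I.PrefOver p v u)

/-- `f 0, f 1, …, f n` is an augmenting path with respect to the matching `p`
inside the subgraph `G_M`: an odd number `n` of edges, alternately outside and
inside `p`, with both endpoints unmatched. -/
def IsAugPath (I : Inst V) (p : V → Option V) (n : ℕ) (f : ℕ → V) : Prop :=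
  n % 2 = 1 ∧
  (∀ i j, i ≤ n → j ≤ n → f i = f j → i = j) ∧
  (∀ i, i < n → I.GMAdj p (f i) (f (i + 1))) ∧
  (∀ i, i < n → (p (f i) = some (f (i + 1)) ↔ i % 2 = 1)) ∧
  p (f 0) = none ∧ p (f n) = none

/-- `G_M` contains an augmenting path with respect to `p`. -/
def HasAugPath (I : Inst V) (p : V → Option V) : Prop := ∃ n f, I.IsAugPath p n f

/-- `u` prefers its situation in the matching `p` to `v`. -/
def PrefSit (I : Inst V) (p : V → Option V) (u v : V) : Prop :=
  match p u with
  | none => False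
  | some w => I.pref u w v

/-- The weight `wt_p(u,v)` of an edge: `2` for a blocking edge, `-2` for a
`(-,-)` edge, `0` otherwise. -/
noncomputable def wtE (I : Inst V) (p : V → Option V) (u v : V) : ℤ :=
  if I.PrefOver p u v ∧ I.PrefOver p v u then 2
  else if I.PrefSit p u v ∧ I.PrefSit p v u then -2 else 0

/-- The weight `wt_p(u,u)` of a self-loop. -/
def wtSelf (p : V → Option V) (u : V) : ℤ := if p u = none then 0 else -1

/-- A witness (dual certificate) for the popularity of the matching `p`. -/
def IsWitness (I : Inst V) (p : V → Option V) (α : V → ℤ) : Prop :=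
  (∀ u, α u = 0 ∨ α u = 1 ∨ α u = -1) ∧
  (∑ u : V, α u) = 0 ∧
  (∀ u v, I.adj u v → I.wtE p u v ≤ α u + α v) ∧
  (∀ u : V, wtSelf p u ≤ α u)

end Inst

end PopMatch

namespace PopMatch

namespace Inst

variable {V : Type*} [DecidableEq V] [Fintype V]

/-- One proposal step of the (men-proposing) Gale–Shapley deferred-acceptance
procedure.  The state consists of the current matching and, for every man, the
list of women he has not yet proposed to.  The first unmatched man with a
nonempty remaining list proposes to the top woman on his list; she accepts if
she is unmatched or prefers him to her current partner (rejecting the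
latter). Returns `none` when no proposal is possible any more. -/
noncomputable def gsStep (I : Inst V) (men : List V)
    (st : (V → Option V) × (V → List V)) :
    Option ((V → Option V) × (V → List V)) :=
  let p := st.1
  let r := st.2
  match men.find? (fun a => decide (p a = none ∧ r a ≠ [])) with
  | none => none
  | some a =>
    match r a with
    | [] => none
    | b :: rest =>
      let r' := Function.update r a rest
      match p b with
      | none =>
          some (Function.update (Function.update p a (some b)) b (some a), r')
      | some a' =>
          if I.pref b a a' then
            some (Function.update (Function.update (Function.update p a' none)
                    a (some b)) b (some a), r')
          else some (p, r')

/-- Iterate `gsStep` with the given amount of fuel. -/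
noncomputable def gsRun (I : Inst V) (men : List V) :
    ℕ → (V → Option V) × (V → List V) → (V → Option V) × (V → List V)
  | 0, st => st
  | (k + 1), st =>
    match gsStep I men st with
    | none => st
    | some st' => gsRun I men k st'

/-- The matching computed by the men-proposing Gale–Shapley algorithm on the
instance `I`, started from the matching `start` (instead of the empty
matching): unmatched men propose in decreasing order of preference, and a
woman rejects her current partner whenever she receives a proposal she
prefers. -/
noncomputable def galeShapleyFrom (I : Inst V) (start : V → Option V) :
    V → Option V :=
  (gsRun I I.A.toList ((∑ v : V, (I.plist v).length) + 1)
    (start, fun a => I.plist a)).1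

/-- The subinstance of `I` induced on the vertex set `S` (vertices outside `S`
become isolated). -/
noncomputable def induce (I : Inst V) (S : Finset V) : Inst V :=
  ⟨I.A ∩ S, I.B ∩ S,
   fun v => if v ∈ S then (I.plist v).filter (fun w => decide (w ∈ S)) else []⟩

end Inst

/-- The vertex set of the instance `G'`: for each vertex `u` of `G` there are
three vertices `u⁺ = .inl u`, `u⁻ = .inr (.inl u)` and `d(u) = .inr (.inr u)`. -/
abbrev PV (V : Type*) := V ⊕ (V ⊕ V)

/-- The instance `G'` associated with a marriage instance `G`: every edge
`(a,b)` of `G` is replaced by the two copies `(a⁺,b⁻)` and `(a⁻,b⁺)`, and if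
`v₁ ≻ ⋯ ≻ v_k` is `u`'s preference list in `G`, then
`u⁺ : v₁⁻ ≻ ⋯ ≻ v_k⁻ ≻ d(u)`, `u⁻ : d(u) ≻ v₁⁺ ≻ ⋯ ≻ v_k⁺`, and
`d(u) : u⁺ ≻ u⁻`.  Stable matchings of this instance are exactly the stable
matchings of the bidirected instance `G'`, and they project to dominant
matchings of `G`. -/
noncomputable def primed {V : Type*} [DecidableEq V] (I : Inst V) :
    Inst (PV V) where
  A := I.A.image Sum.inl ∪ I.A.image (fun u => Sum.inr (Sum.inl u)) ∪
        I.B.image (fun u => Sum.inr (Sum.inr u))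
  B := I.B.image Sum.inl ∪ I.B.image (fun u => Sum.inr (Sum.inl u)) ∪
        I.A.image (fun u => Sum.inr (Sum.inr u))
  plist := fun x =>
    match x with
    | Sum.inl u =>
        (I.plist u).map (fun v => Sum.inr (Sum.inl v)) ++ [Sum.inr (Sum.inr u)]
    | Sum.inr (Sum.inl u) => Sum.inr (Sum.inr u) :: (I.plist u).map Sum.inl
    | Sum.inr (Sum.inr u) => [Sum.inl u, Sum.inr (Sum.inl u)]

end PopMatch

namespace List

variable {α : Type*} [DecidableEq α]

theorem idxOf_filter_lt_idxOf_filter_iff (p : α → Bool) {x y : α} (hx : p x) (hy : p y)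
    (l : List α) : (l.filter p).idxOf x < (l.filter p).idxOf y ↔ l.idxOf x < l.idxOf y := by
  induction l with
  | nil => simp
  | cons z l ih =>
    by_cases hz : p z
    · rw [filter_cons_of_pos hz]
      by_cases hzx : z = x <;> by_cases hzy : z = y <;> simp_all
    · rw [filter_cons_of_neg hz]
      have hzx : z ≠ x := by rintro rfl; exact hz hx
      have hzy : z ≠ y := by rintro rfl; exact hz hy
      simp [hzx, hzy, ih]

theorem Nodup.mem_iff_idxOf_lt {l t : List α} {b w : α} (hnd : (l ++ b :: t).Nodup) :
    w ∈ t ↔ w ∈ l ++ b :: t ∧ (l ++ b :: t).idxOf b < (l ++ b :: t).idxOf w := by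
  have hb : b ∉ l := fun h => disjoint_of_nodup_append hnd h mem_cons_self
  have hbt : b ∉ t := (nodup_cons.1 (nodup_append.1 hnd).2.1).1
  constructor
  · intro hw
    have hwl : w ∉ l := fun h => disjoint_of_nodup_append hnd h (mem_cons_of_mem _ hw)
    have hwb : b ≠ w := by rintro rfl; exact hbt hw
    simp [idxOf_append, hb, hwl, hwb, hw]
  · rintro ⟨hw, hlt⟩
    rcases mem_append.1 hw with hw | hw
    · have := idxOf_lt_length_of_mem hw
      simp [idxOf_append, hb, hw] at hlt
      omega
    · rcases mem_cons.1 hw with rfl | hw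
      · exact absurd hlt (lt_irrefl _)
      · exact hw

end List

namespace PopMatch

namespace Inst

section Marriage

variable {V : Type*} {I J : Inst V} {u v : V}

/-- `IsValid` without `A ∪ B` covering every vertex, so that it passes to induced
subinstances. -/
structure IsMarriage (J : Inst V) : Prop where
  nodup : ∀ v, (J.plist v).Nodup
  mem_comm : ∀ u v, v ∈ J.plist u ↔ u ∈ J.plist v
  disjoint : Disjoint J.A J.B
  bipartite : ∀ u v, v ∈ J.plist u → (u ∈ J.A ∧ v ∈ J.B) ∨ (u ∈ J.B ∧ v ∈ J.A)

lemma IsValid.isMarriage (hI : I.IsValid) : I.IsMarriage :=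
  ⟨hI.1, hI.2.1, hI.2.2.1, hI.2.2.2.2⟩

namespace IsMarriage

lemma adj_of_mem (hJ : J.IsMarriage) (h : v ∈ J.plist u) : J.adj u v :=
  ⟨h, (hJ.mem_comm u v).1 h⟩

lemma mem_B_of_mem_A (hJ : J.IsMarriage) (hu : u ∈ J.A) (h : v ∈ J.plist u) : v ∈ J.B :=
  ((hJ.bipartite u v h).resolve_right fun h' =>
    Finset.disjoint_left.1 hJ.disjoint hu h'.1).2

lemma mem_A_of_mem_B (hJ : J.IsMarriage) (hu : u ∈ J.B) (h : v ∈ J.plist u) : v ∈ J.A :=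
  ((hJ.bipartite u v h).resolve_left fun h' =>
    Finset.disjoint_left.1 hJ.disjoint h'.1 hu).2

lemma ne_of_mem_A_of_mem_B (hJ : J.IsMarriage) (hu : u ∈ J.A) (hv : v ∈ J.B) : u ≠ v := by
  rintro rfl; exact Finset.disjoint_left.1 hJ.disjoint hu hv

end IsMarriage

end Marriage

section Preference

variable {V : Type*} [DecidableEq V] {I : Inst V} {p q : V → Option V}
  {u v w x : V}

lemma pref_irrefl : ¬ I.pref u v v := fun h => lt_irrefl _ h.2.2

lemma pref_asymm (h : I.pref u v w) : ¬ I.pref u w v := fun h' => lt_asymm h.2.2 h'.2.2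

lemma pref_trans (h : I.pref u v w) (h' : I.pref u w x) : I.pref u v x :=
  ⟨h.1, h'.2.1, h.2.2.trans h'.2.2⟩

lemma pref_or_pref (hv : v ∈ I.plist u) (hw : w ∈ I.plist u) (hne : v ≠ w) :
    I.pref u v w ∨ I.pref u w v := by
  have : (I.plist u).idxOf v ≠ (I.plist u).idxOf w := fun h => hne ((List.idxOf_inj hv).1 h)
  rcases this.lt_or_gt with h | h
  · exact Or.inl ⟨hv, hw, h⟩
  · exact Or.inr ⟨hw, hv, h⟩

lemma prefOver_of_eq_none (h : p u = none) : I.PrefOver p u v := by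
  simp [PrefOver, h]

lemma prefOver_iff_of_eq_some (h : p u = some w) : I.PrefOver p u v ↔ I.pref u v w := by
  simp [PrefOver, h]

lemma not_prefSit_of_eq_none (h : p u = none) : ¬ I.PrefSit p u v := by
  simp [PrefSit, h]

lemma prefSit_iff_of_eq_some (h : p u = some w) : I.PrefSit p u v ↔ I.pref u w v := by
  simp [PrefSit, h]

lemma PrefSit.exists (h : I.PrefSit p u v) : ∃ w, p u = some w ∧ I.pref u w v := by
  rcases hpu : p u with _ | w
  · exact absurd h (not_prefSit_of_eq_none hpu)
  · exact ⟨w, rfl, (prefSit_iff_of_eq_some hpu).1 h⟩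

lemma not_prefOver_self (h : p u = some v) : ¬ I.PrefOver p u v := by
  rw [prefOver_iff_of_eq_some h]; exact pref_irrefl

lemma prefOver_congr {q' : V → Option V} (h : q u = q' u) :
    I.PrefOver q u v ↔ I.PrefOver q' u v := by
  simp only [PrefOver, h]

lemma PrefOver.of_pref (h : I.PrefOver p u v) (hw : I.pref u w v) : I.PrefOver p u w := by
  rcases hpu : p u with _ | z
  · exact prefOver_of_eq_none hpu
  · rw [prefOver_iff_of_eq_some hpu] at h ⊢
    exact pref_trans hw h

lemma PrefOver.pref_of_prefSit (h : I.PrefOver p u v) (h' : I.PrefSit p u x) :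
    I.pref u v x := by
  rcases hpu : p u with _ | z
  · exact absurd h' (not_prefSit_of_eq_none hpu)
  · exact pref_trans ((prefOver_iff_of_eq_some hpu).1 h) ((prefSit_iff_of_eq_some hpu).1 h')

lemma PrefSit.not_prefOver (h : I.PrefSit p u v) : ¬ I.PrefOver p u v := by
  rcases hpu : p u with _ | z
  · exact absurd h (not_prefSit_of_eq_none hpu)
  · rw [prefOver_iff_of_eq_some hpu]
    exact pref_asymm ((prefSit_iff_of_eq_some hpu).1 h)

lemma prefSit_of_not_prefOver (hp : I.IsMatching p) (hv : v ∈ I.plist u) (hne : p u ≠ some v)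
    (h : ¬ I.PrefOver p u v) : I.PrefSit p u v := by
  rcases hpu : p u with _ | z
  · exact absurd (prefOver_of_eq_none hpu) h
  · rw [prefSit_iff_of_eq_some hpu]
    rw [prefOver_iff_of_eq_some hpu] at h
    have hzv : z ≠ v := by rintro rfl; exact hne hpu
    exact (pref_or_pref (hp.2 u z hpu).1 hv hzv).resolve_right h

def NoWorse (I : Inst V) (q p : V → Option V) (u : V) : Prop :=
  ∀ w, p u = some w → ¬ I.PrefOver q u w

lemma NoWorse.not_prefOver (h : I.NoWorse q p u) (hs : I.PrefSit p u v) :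
    ¬ I.PrefOver q u v := by
  rcases hpu : p u with _ | z
  · exact absurd hs (not_prefSit_of_eq_none hpu)
  · exact fun hq => h z hpu (hq.of_pref ((prefSit_iff_of_eq_some hpu).1 hs))

lemma NoWorse.congr {q' p' : V → Option V} (h : I.NoWorse q p u) (hq : q u = q' u)
    (hp : p u = p' u) : I.NoWorse q' p' u := fun w hw hq' =>
  h w (hp.trans hw) ((prefOver_congr hq).2 hq')

lemma NoWorse.prefOver (hp : I.IsMatching p) (h : I.NoWorse q p u) (hv : v ∈ I.plist u)
    (hq : I.PrefOver q u v) : I.PrefOver p u v := by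
  by_contra hn
  by_cases hpu : p u = some v
  · exact h v hpu hq
  · exact h.not_prefOver (prefSit_of_not_prefOver hp hv hpu hn) hq

lemma noWorse_of_eq (h : q u = p u) : I.NoWorse q p u :=
  fun _ hpu => not_prefOver_self (h.trans hpu)

lemma IsWitness.two_le_add [Fintype V] {α : V → ℤ} (hα : I.IsWitness p α) (huv : I.adj u v)
    (hu : I.PrefOver p u v) (hv : I.PrefOver p v u) : 2 ≤ α u + α v := by
  simpa [wtE, hu, hv] using hα.2.2.1 u v huv

lemma IsWitness.prefSit_of_add_neg [Fintype V] {α : V → ℤ} (hα : I.IsWitness p α)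
    (huv : I.adj u v) (hneg : α u + α v < 0) : I.PrefSit p u v := by
  have h := hα.2.2.1 u v huv
  unfold wtE at h
  split_ifs at h with h₁ h₂
  · omega
  · exact h₂.1
  · omega

end Preference

section Induce

variable {V : Type*} [DecidableEq V] {I : Inst V} {q : V → Option V} {s : Finset V}
  {u v w : V}

lemma induce_A : (I.induce s).A = I.A ∩ s := rfl

lemma induce_B : (I.induce s).B = I.B ∩ s := rfl

lemma mem_induce_plist : v ∈ (I.induce s).plist u ↔ u ∈ s ∧ v ∈ I.plist u ∧ v ∈ s := by
  by_cases hu : u ∈ s <;> simp [induce, hu]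

lemma induce_adj_iff : (I.induce s).adj u v ↔ u ∈ s ∧ v ∈ s ∧ I.adj u v := by
  simp only [adj, mem_induce_plist]
  tauto

lemma IsMarriage.induce (hI : I.IsMarriage) (s : Finset V) : (I.induce s).IsMarriage where
  nodup v := by
    by_cases hv : v ∈ s <;> simp [Inst.induce, hv, (hI.nodup v).filter]
  mem_comm u v := by
    simp only [mem_induce_plist, hI.mem_comm u v]
    tauto
  disjoint := hI.disjoint.mono Finset.inter_subset_left Finset.inter_subset_left
  bipartite u v h := by
    obtain ⟨hu, huv, hv⟩ := mem_induce_plist.1 h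
    simp only [induce_A, induce_B, Finset.mem_inter]
    rcases hI.bipartite u v huv with h' | h'
    · exact Or.inl ⟨⟨h'.1, hu⟩, h'.2, hv⟩
    · exact Or.inr ⟨⟨h'.1, hu⟩, h'.2, hv⟩

lemma induce_pref_iff (hu : u ∈ s) (hv : v ∈ s) (hw : w ∈ s) :
    (I.induce s).pref u v w ↔ I.pref u v w := by
  have hpl : (I.induce s).plist u = (I.plist u).filter (fun x => decide (x ∈ s)) := by
    simp [induce, hu]
  simp only [pref, hpl, List.mem_filter, hv, hw, decide_true, and_true,
    List.idxOf_filter_lt_idxOf_filter_iff (fun x => decide (x ∈ s)) (x := v) (y := w)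
      (decide_eq_true hv) (decide_eq_true hw)]

lemma induce_prefOver_iff (hu : u ∈ s) (hv : v ∈ s) (hq : ∀ w, q u = some w → w ∈ s) :
    (I.induce s).PrefOver q u v ↔ I.PrefOver q u v := by
  rcases hqu : q u with _ | w
  · simp [prefOver_of_eq_none hqu]
  · rw [prefOver_iff_of_eq_some hqu, prefOver_iff_of_eq_some hqu,
      induce_pref_iff hu hv (hq w hqu)]

lemma induce_prefSit_iff (hu : u ∈ s) (hv : v ∈ s) (hq : ∀ w, q u = some w → w ∈ s) :
    (I.induce s).PrefSit q u v ↔ I.PrefSit q u v := by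
  rcases hqu : q u with _ | w
  · simp [not_prefSit_of_eq_none hqu]
  · rw [prefSit_iff_of_eq_some hqu, prefSit_iff_of_eq_some hqu,
      induce_pref_iff hu (hq w hqu) hv]

lemma IsMatching.mem_of_induce (h : (I.induce s).IsMatching q) (hq : q u = some w) :
    u ∈ s ∧ w ∈ s :=
  (induce_adj_iff.1 (h.2 u w hq)).imp_right And.left

lemma NoWorse.of_induce {p : V → Option V} (h : (I.induce s).NoWorse q p u) (hu : u ∈ s)
    (hq : ∀ w, q u = some w → w ∈ s) (hp : ∀ w, p u = some w → w ∈ s) : I.NoWorse q p u :=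
  fun w hpu =>
    (induce_prefOver_iff hu (hp w hpu) hq).not.1 (h w hpu)

end Induce

section Propose

variable {V : Type*} [DecidableEq V] {J : Inst V} {q : V → Option V} {a b v x : V}

/-- The matching after `b` has answered a proposal of `a`, as in `gsStep`. -/
noncomputable def propose (J : Inst V) (q : V → Option V) (a b : V) : V → Option V :=
  match q b with
  | none => Function.update (Function.update q a (some b)) b (some a)
  | some a' =>
      if J.pref b a a' then
        Function.update (Function.update (Function.update q a' none) a (some b)) b (some a)
      else q

lemma propose_of_not_prefOver (h : ¬ J.PrefOver q b a) : J.propose q a b = q := by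
  rcases hqb : q b with _ | a'
  · exact absurd (prefOver_of_eq_none hqb) h
  · simp [propose, hqb, (prefOver_iff_of_eq_some hqb).not.1 h]

lemma propose_right (h : J.PrefOver q b a) : J.propose q a b b = some a := by
  rcases hqb : q b with _ | a'
  · simp [propose, hqb]
  · simp [propose, hqb, (prefOver_iff_of_eq_some hqb).1 h]

lemma propose_left (h : J.PrefOver q b a) (hab : a ≠ b) : J.propose q a b a = some b := by
  rcases hqb : q b with _ | a'
  · simp [propose, hqb, hab]
  · simp [propose, hqb, (prefOver_iff_of_eq_some hqb).1 h, hab]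

lemma propose_of_ne (hq : J.IsMatching q) (h : J.PrefOver q b a) (hxa : x ≠ a) (hxb : x ≠ b) :
    J.propose q a b x = if q x = some b then none else q x := by
  have hsym := hq.1
  rcases hqb : q b with _ | a'
  · have : q x ≠ some b := fun hx => by simpa [hqb] using hsym x b hx
    simp [propose, hqb, hxa, hxb, this]
  · have hpref := (prefOver_iff_of_eq_some hqb).1 h
    by_cases hxa' : x = a'
    · subst hxa'
      simp [propose, hqb, hpref, hxa, hxb, hsym b x hqb]
    · have : q x ≠ some b := fun hx =>
        hxa' (Option.some_inj.1 ((hsym x b hx).symm.trans hqb))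
      simp [propose, hqb, hpref, hxa, hxb, hxa', this]

lemma isMatching_propose (hq : J.IsMatching q) (hab : J.adj a b) (hne : a ≠ b)
    (hqa : q a = none) : J.IsMatching (J.propose q a b) := by
  by_cases hacc : J.PrefOver q b a
  swap
  · rwa [propose_of_not_prefOver hacc]
  have hold : ∀ {u v}, J.propose q a b u = some v → u ≠ a → u ≠ b →
      q u = some v ∧ v ≠ b := fun {u v} h hua hub => by
    rw [propose_of_ne hq hacc hua hub] at h
    split_ifs at h with hb
    exact ⟨h, by rintro rfl; exact hb h⟩
  refine ⟨fun u v huv => ?_, fun u v huv => ?_⟩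
  · by_cases hua : u = a
    · subst hua
      rw [propose_left hacc hne, Option.some_inj] at huv
      subst huv
      exact propose_right hacc
    by_cases hub : u = b
    · subst hub
      rw [propose_right hacc, Option.some_inj] at huv
      subst huv
      exact propose_left hacc hne
    obtain ⟨hquv, hvb⟩ := hold huv hua hub
    have hqvu := hq.1 u v hquv
    have hva : v ≠ a := by rintro rfl; simp [hqa] at hqvu
    rw [propose_of_ne hq hacc hva hvb, hqvu, if_neg (by simpa using hub)]
  · by_cases hua : u = a
    · subst hua
      rw [propose_left hacc hne, Option.some_inj] at huv
      exact huv ▸ hab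
    by_cases hub : u = b
    · subst hub
      rw [propose_right hacc, Option.some_inj] at huv
      exact huv ▸ ⟨hab.2, hab.1⟩
    exact hq.2 u v (hold huv hua hub).1

lemma propose_of_mem_A (hJ : J.IsMarriage) (hq : J.IsMatching q) (hb : b ∈ J.B) (hx : x ∈ J.A)
    (hxa : x ≠ a) :
    J.propose q a b x = q x ∨
      (J.PrefOver q b a ∧ q x = some b ∧ J.propose q a b x = none) := by
  by_cases hacc : J.PrefOver q b a
  · rw [propose_of_ne hq hacc hxa (hJ.ne_of_mem_A_of_mem_B hx hb)]
    by_cases hxb : q x = some b <;> simp [hxb, hacc]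
  · simp [propose_of_not_prefOver hacc]

lemma propose_of_mem_B (hJ : J.IsMarriage) (hq : J.IsMatching q) (ha : a ∈ J.A)
    (hb : b ∈ J.B) (hx : x ∈ J.B) :
    J.propose q a b x = q x ∨ (x = b ∧ J.PrefOver q b a ∧ J.propose q a b x = some a) := by
  by_cases hacc : J.PrefOver q b a
  · by_cases hxb : x = b
    · subst hxb
      exact Or.inr ⟨rfl, hacc, propose_right hacc⟩
    have hxa : x ≠ a := (hJ.ne_of_mem_A_of_mem_B ha hx).symm
    have hqx : q x ≠ some b := fun h =>
      hJ.ne_of_mem_A_of_mem_B (hJ.mem_A_of_mem_B hb (hq.2 x b h).2) hx rfl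
    left
    simp [propose_of_ne hq hacc hxa hxb, hqx]
  · simp [propose_of_not_prefOver hacc]

lemma PrefSit.propose (hJ : J.IsMarriage) (hq : J.IsMatching q) (ha : a ∈ J.A)
    (hb : b ∈ J.B) (hx : x ∈ J.B) (h : J.PrefSit q x v) :
    J.PrefSit (J.propose q a b) x v := by
  rcases propose_of_mem_B hJ hq ha hb hx with hx' | ⟨rfl, hacc, hx'⟩
  · simpa [PrefSit, hx'] using h
  · exact (prefSit_iff_of_eq_some hx').2 (hacc.pref_of_prefSit h)

lemma not_prefOver_propose (hJ : J.IsMarriage) (hq : J.IsMatching q) (ha : a ∈ J.A)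
    (hb : b ∈ J.B) (hx : x ∈ J.B) (h : ¬ J.PrefOver q x v) :
    ¬ J.PrefOver (J.propose q a b) x v := by
  rcases propose_of_mem_B hJ hq ha hb hx with hx' | ⟨rfl, hacc, hx'⟩
  · rwa [prefOver_congr hx']
  · rw [prefOver_iff_of_eq_some hx']
    exact fun hva => h (hacc.of_pref hva)

end Propose

section Step

variable {V : Type*} [DecidableEq V] {J : Inst V} {men : List V}

lemma gsStep_eq_some {st st' : (V → Option V) × (V → List V)}
    (h : J.gsStep men st = some st') :
    ∃ a b rest, a ∈ men ∧ st.1 a = none ∧ st.2 a = b :: rest ∧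
      st' = (J.propose st.1 a b, Function.update st.2 a rest) := by
  obtain ⟨q, r⟩ := st
  unfold gsStep at h
  simp only at h
  split at h
  · exact absurd h (by simp)
  rename_i a hfind
  obtain ⟨hqa, -⟩ : q a = none ∧ r a ≠ [] := by simpa using List.find?_some hfind
  split at h
  · exact absurd h (by simp)
  rename_i b rest hra
  refine ⟨a, b, rest, List.mem_of_find?_eq_some hfind, hqa, hra, ?_⟩
  rcases hqb : q b with _ | a'
  · simp only [hqb, Option.some_inj] at h
    simp [← h, propose, hqb]
  · simp only [hqb] at h
    split_ifs at h with hpref <;> simp [← Option.some_inj.1 h, propose, hqb, hpref]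

lemma gsStep_eq_none {st : (V → Option V) × (V → List V)} (h : J.gsStep men st = none) :
    ∀ a ∈ men, st.1 a = none → st.2 a = [] := by
  obtain ⟨q, r⟩ := st
  intro a ha hqa
  by_contra hne
  unfold gsStep at h
  simp only at h
  split at h
  · rename_i hfind
    exact List.find?_eq_none.1 hfind a ha (by simpa using ⟨hqa, hne⟩)
  rename_i a₀ hfind
  obtain ⟨-, hne₀⟩ : q a₀ = none ∧ r a₀ ≠ [] := by simpa using List.find?_some hfind
  split at h
  · exact hne₀ ‹_›
  split at h
  · simp at h
  · split_ifs at h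

lemma gsRun_induction (P : (V → Option V) × (V → List V) → Prop)
    (hP : ∀ st st', P st → J.gsStep men st = some st' → P st') :
    ∀ k st, P st → P (J.gsRun men k st) := by
  intro k
  induction k with
  | zero => exact fun st h => h
  | succ k ih =>
    intro st h
    rcases hs : J.gsStep men st with _ | st'
    · simpa [gsRun, hs] using h
    · simpa [gsRun, hs] using ih st' (hP st st' h hs)

lemma sum_length_lt_of_gsStep_eq_some [Fintype V] {st st' : (V → Option V) × (V → List V)}
    (h : J.gsStep men st = some st') : ∑ v, (st'.2 v).length < ∑ v, (st.2 v).length := by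
  obtain ⟨a, b, rest, -, -, hra, rfl⟩ := gsStep_eq_some h
  refine Finset.sum_lt_sum (fun v _ => ?_) ⟨a, Finset.mem_univ a, by simp [hra]⟩
  by_cases hva : v = a
  · subst hva; simp [hra]
  · simp [Function.update_of_ne hva]

lemma gsStep_gsRun_eq_none [Fintype V] :
    ∀ k st, ∑ v, (st.2 v).length < k → J.gsStep men (J.gsRun men k st) = none := by
  intro k
  induction k with
  | zero => intro st h; omega
  | succ k ih =>
    intro st h
    rcases hs : J.gsStep men st with _ | st'
    · simp [gsRun, hs]
    · have := sum_length_lt_of_gsStep_eq_some hs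
      simpa [gsRun, hs] using ih st' (by omega)

end Step

section Invariant

variable {V : Type*} [DecidableEq V] {J : Inst V} {start q : V → Option V} {r : V → List V}
  {a b x w : V} {rest : List V}

lemma mem_iff_pref_of_plist_eq (hnd : (J.plist a).Nodup) {l t : List V}
    (hl : J.plist a = l ++ b :: t) : w ∈ t ↔ J.pref a b w := by
  rw [List.Nodup.mem_iff_idxOf_lt (hl ▸ hnd)]
  simp [pref, hl]

/-- `r a` is the part of `a`'s preference list he has not proposed to yet. -/
structure GSInv (J : Inst V) (start q : V → Option V) (r : V → List V) : Prop where
  isMatching : J.IsMatching q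
  suffix : ∀ a, r a <:+ J.plist a
  prefSit : ∀ a ∈ J.A, ∀ b ∈ J.plist a, b ∉ r a → q a ≠ some b → J.PrefSit q b a
  start_or_split : ∀ a ∈ J.A, ∀ b, q a = some b →
    start a = some b ∨ ∃ l, J.plist a = l ++ b :: r a
  noWorse : ∀ b ∈ J.B, J.NoWorse q start b

lemma GSInv.mem_iff_pref (hJ : J.IsMarriage) (h : GSInv J start q r) (ha : a ∈ J.A)
    (hqa : q a = some b) (hs : start a ≠ some b) : w ∈ r a ↔ J.pref a b w := by
  obtain ⟨l, hl⟩ := (h.start_or_split a ha b hqa).resolve_left hs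
  exact mem_iff_pref_of_plist_eq (hJ.nodup a) hl

lemma GSInv.head_mem_plist (h : GSInv J start q r) (hra : r a = b :: rest) :
    b ∈ J.plist a :=
  (h.suffix a).subset (hra ▸ List.mem_cons_self)

lemma GSInv.prefSit_propose (hJ : J.IsMarriage) (h : GSInv J start q r) (ha : a ∈ J.A)
    (hqa : q a = none) (hra : r a = b :: rest) :
    ∀ x ∈ J.A, ∀ w ∈ J.plist x, w ∉ Function.update r a rest x →
      J.propose q a b x ≠ some w → J.PrefSit (J.propose q a b) w x := by
  intro x hx w hw hwr hne
  have hb := hJ.mem_B_of_mem_A ha (h.head_mem_plist hra)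
  have hwB := hJ.mem_B_of_mem_A hx hw
  by_cases hxa : x = a
  · subst hxa
    rw [Function.update_self] at hwr
    by_cases hwb : w = b
    · subst hwb
      have hrej : ¬ J.PrefOver q w x := fun hacc =>
        hne (propose_left hacc (hJ.ne_of_mem_A_of_mem_B ha hb))
      rw [propose_of_not_prefOver hrej]
      refine prefSit_of_not_prefOver h.isMatching ((hJ.mem_comm _ _).1 hw) (fun hwx => ?_) hrej
      simpa [hqa] using h.isMatching.1 _ _ hwx
    · exact (h.prefSit x hx w hw (by simpa [hra, hwb] using hwr) (by simp [hqa])).propose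
        hJ h.isMatching ha hb hwB
  rw [Function.update_of_ne hxa] at hwr
  rcases propose_of_mem_A hJ h.isMatching hb hx hxa with hx' | ⟨hacc, hqx, -⟩
  · exact (h.prefSit x hx w hw hwr (by rwa [← hx'])).propose hJ h.isMatching ha hb hwB
  by_cases hwb : w = b
  · subst hwb
    rw [prefSit_iff_of_eq_some (propose_right hacc)]
    exact (prefOver_iff_of_eq_some (h.isMatching.1 x w hqx)).1 hacc
  · refine (h.prefSit x hx w hw hwr ?_).propose hJ h.isMatching ha hb hwB
    simpa [hqx] using Ne.symm hwb

lemma GSInv.start_or_split_propose (hJ : J.IsMarriage) (h : GSInv J start q r) (ha : a ∈ J.A)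
    (hqa : q a = none) (hra : r a = b :: rest) :
    ∀ x ∈ J.A, ∀ w, J.propose q a b x = some w →
      start x = some w ∨ ∃ l, J.plist x = l ++ w :: Function.update r a rest x := by
  intro x hx w hxw
  have hb := hJ.mem_B_of_mem_A ha (h.head_mem_plist hra)
  by_cases hxa : x = a
  · subst hxa
    have hacc : J.PrefOver q b x := by
      by_contra hrej
      simp [propose_of_not_prefOver hrej, hqa] at hxw
    rw [propose_left hacc (hJ.ne_of_mem_A_of_mem_B ha hb), Option.some_inj] at hxw
    subst hxw
    obtain ⟨l, hl⟩ := h.suffix x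
    exact Or.inr ⟨l, by rw [Function.update_self, ← hl, hra]⟩
  rw [Function.update_of_ne hxa]
  rcases propose_of_mem_A hJ h.isMatching hb hx hxa with hx' | ⟨-, -, hx'⟩
  · exact h.start_or_split x hx w (hx' ▸ hxw)
  · simp [hx'] at hxw

lemma GSInv.propose (hJ : J.IsMarriage) (h : GSInv J start q r) (ha : a ∈ J.A)
    (hqa : q a = none) (hra : r a = b :: rest) :
    GSInv J start (J.propose q a b) (Function.update r a rest) := by
  have hbpl := h.head_mem_plist hra
  have hb := hJ.mem_B_of_mem_A ha hbpl
  refine ⟨isMatching_propose h.isMatching (hJ.adj_of_mem hbpl)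
      (hJ.ne_of_mem_A_of_mem_B ha hb) hqa, fun x => ?_, h.prefSit_propose hJ ha hqa hra,
    h.start_or_split_propose hJ ha hqa hra, fun x hx w hsx =>
      not_prefOver_propose hJ h.isMatching ha hb hx (h.noWorse x hx w hsx)⟩
  by_cases hxa : x = a
  · subst hxa
    rw [Function.update_self]
    exact (List.suffix_cons b rest).trans (hra ▸ h.suffix x)
  · rw [Function.update_of_ne hxa]
    exact h.suffix x

end Invariant

section Reserve

variable {V : Type*} [DecidableEq V] {J : Inst V} {start q R : V → Option V} {r : V → List V}
  {a b x u v : V} {rest : List V}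

/-- Men matched in `R` never end up worse off than with their `R`-partner
(`ReserveInv.noWorse`). -/
structure IsReserve (J : Inst V) (start R : V → Option V) : Prop where
  isMatching : J.IsMatching R
  start_eq_none : ∀ u w, R u = some w → start u = none
  prefSit : ∀ b ∈ J.B, ∀ a, R b = some a → ∀ x ∈ J.A, J.pref b x a → J.PrefSit R x b

def ReserveInv (J : Inst V) (R q : V → Option V) (r : V → List V) : Prop :=
  ∀ a ∈ J.A, ∀ b, R a = some b → b ∈ r a ∨ ¬ J.PrefOver q a b

lemma isReserve_none : J.IsReserve start (fun _ => none) :=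
  ⟨⟨by simp, by simp⟩, by simp, by simp⟩

lemma ReserveInv.exists_of_pref (hR : J.IsReserve start R) (hres : ReserveInv J R q r)
    (hb : b ∈ J.B) (hRb : R b = some a) (hx : x ∈ J.A) (hpref : J.pref b x a) :
    ∃ w, R x = some w ∧ J.pref x w b ∧ (w ∈ r x ∨ ¬ J.PrefOver q x w) := by
  obtain ⟨w, hRx, hpw⟩ := (hR.prefSit b hb a hRb x hx hpref).exists
  exact ⟨w, hRx, hpw, hres x hx w hRx⟩

lemma ReserveInv.propose_self (hJ : J.IsMarriage) (h : GSInv J start q r)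
    (hR : J.IsReserve start R) (hres : ReserveInv J R q r) (ha : a ∈ J.A) (hqa : q a = none)
    (hra : r a = b :: rest) {b₀ : V} (hRa : R a = some b₀) :
    b₀ ∈ rest ∨ ¬ J.PrefOver (J.propose q a b) a b₀ := by
  have hb := hJ.mem_B_of_mem_A ha (h.head_mem_plist hra)
  have hb₀ : b₀ ∈ b :: rest :=
    hra ▸ (hres a ha b₀ hRa).resolve_right (not_not.2 (prefOver_of_eq_none hqa))
  rcases List.mem_cons.1 hb₀ with rfl | hrest
  swap
  · exact Or.inl hrest
  right
  by_cases hacc : J.PrefOver q b₀ a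
  · exact not_prefOver_self (propose_left hacc (hJ.ne_of_mem_A_of_mem_B ha hb))
  -- `b₀` rejects `a` for some `a'`, who must have already passed his own `R`-partner.
  exfalso
  obtain ⟨a', hqb, hpref⟩ := (prefSit_of_not_prefOver h.isMatching
    ((hJ.mem_comm _ _).1 (h.head_mem_plist hra)) (fun hb₀a => by
      simpa [hqa] using h.isMatching.1 _ _ hb₀a) hacc).exists
  have ha' := hJ.mem_A_of_mem_B hb (h.isMatching.2 _ _ hqb).1
  obtain ⟨w, hRa', hpw, hw⟩ :=
    hres.exists_of_pref hR hb (hR.isMatching.1 a b₀ hRa) ha' hpref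
  have hqa' := h.isMatching.1 _ _ hqb
  rcases hw with hw | hw
  · have hs : start a' ≠ some b₀ := by simp [hR.start_eq_none a' w hRa']
    exact pref_asymm hpw ((h.mem_iff_pref hJ ha' hqa' hs).1 hw)
  · exact hw ((prefOver_iff_of_eq_some hqa').2 hpw)

lemma ReserveInv.mem_of_bumped (hJ : J.IsMarriage) (h : GSInv J start q r)
    (hR : J.IsReserve start R) (hres : ReserveInv J R q r) (ha : a ∈ J.A) (hqa : q a = none)
    (hra : r a = b :: rest) (hx : x ∈ J.A) (hacc : J.PrefOver q b a) (hqx : q x = some b)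
    {b₀ : V} (hRx : R x = some b₀) : b₀ ∈ r x := by
  have hb := hJ.mem_B_of_mem_A ha (h.head_mem_plist hra)
  have hs : start x ≠ some b := by simp [hR.start_eq_none x b₀ hRx]
  rcases hres x hx b₀ hRx with hmem | hnot
  · exact hmem
  by_cases hb₀ : b₀ = b
  · -- `a`'s own `R`-partner would have to come before `b` on his list.
    exfalso
    subst hb₀
    obtain ⟨w, -, hpw, hw⟩ := hres.exists_of_pref hR hb (hR.isMatching.1 x b₀ hRx) ha
      ((prefOver_iff_of_eq_some (h.isMatching.1 x b₀ hqx)).1 hacc)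
    have hw' : w ∈ b₀ :: rest :=
      hra ▸ hw.resolve_right (not_not.2 (prefOver_of_eq_none hqa))
    rcases List.mem_cons.1 hw' with rfl | hrest
    · exact pref_irrefl hpw
    obtain ⟨l, hl⟩ := h.suffix a
    rw [hra] at hl
    exact pref_asymm hpw ((mem_iff_pref_of_plist_eq (hJ.nodup a) hl.symm).1 hrest)
  · refine (h.mem_iff_pref hJ hx hqx hs).2 ?_
    exact (pref_or_pref (h.isMatching.2 x b hqx).1 (hR.isMatching.2 x b₀ hRx).1
      (Ne.symm hb₀)).resolve_right ((prefOver_iff_of_eq_some hqx).not.1 hnot)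

lemma ReserveInv.propose (hJ : J.IsMarriage) (h : GSInv J start q r)
    (hR : J.IsReserve start R) (hres : ReserveInv J R q r) (ha : a ∈ J.A) (hqa : q a = none)
    (hra : r a = b :: rest) : ReserveInv J R (J.propose q a b) (Function.update r a rest) := by
  intro x hx b₀ hRx
  by_cases hxa : x = a
  · subst hxa
    rw [Function.update_self]
    exact hres.propose_self hJ h hR ha hqa hra hRx
  rw [Function.update_of_ne hxa]
  have hb := hJ.mem_B_of_mem_A ha (h.head_mem_plist hra)
  rcases propose_of_mem_A hJ h.isMatching hb hx hxa with hx' | ⟨hacc, hqx, -⟩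
  · rw [prefOver_congr hx']
    exact hres x hx b₀ hRx
  · exact Or.inl (hres.mem_of_bumped hJ h hR ha hqa hra hx hacc hqx hRx)

end Reserve

section Outcome

variable {V : Type*} [DecidableEq V] {J : Inst V} {start q R : V → Option V} {r : V → List V}
  {a u v : V}

lemma GSInv.eq_start_of_prefOver (hJ : J.IsMarriage) (h : GSInv J start q r)
    (hterm : ∀ a ∈ J.A, q a = none → r a = []) (hu : u ∈ J.A) (hv : v ∈ J.plist u)
    (huv : J.PrefOver q u v) (hvu : J.PrefOver q v u) : ∃ w, q u = some w ∧ start u = some w := by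
  by_cases hvr : v ∈ r u
  · rcases hqu : q u with _ | w
    · simp [hterm u hu hqu] at hvr
    refine ⟨w, rfl, ?_⟩
    by_contra hs
    exact pref_asymm ((h.mem_iff_pref hJ hu hqu hs).1 hvr) ((prefOver_iff_of_eq_some hqu).1 huv)
  · exact absurd hvu (h.prefSit u hu v hv hvr fun hqu => not_prefOver_self hqu huv).not_prefOver

lemma ReserveInv.noWorse (hJ : J.IsMarriage) (h : GSInv J start q r) (hR : J.IsReserve start R)
    (hres : ReserveInv J R q r) (hterm : ∀ a ∈ J.A, q a = none → r a = []) (ha : a ∈ J.A) :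
    J.NoWorse q R a := by
  intro b₀ hRa
  rcases hres a ha b₀ hRa with hmem | hnot
  · rcases hqa : q a with _ | w
    · simp [hterm a ha hqa] at hmem
    rw [prefOver_iff_of_eq_some hqa]
    have hs : start a ≠ some w := by simp [hR.start_eq_none a b₀ hRa]
    exact pref_asymm ((h.mem_iff_pref hJ ha hqa hs).1 hmem)
  · exact hnot

theorem exists_gsInv_galeShapleyFrom [Fintype V] (hJ : J.IsMarriage)
    (hstart : J.IsMatching start) (hR : J.IsReserve start R) :
    ∃ r, GSInv J start (J.galeShapleyFrom start) r ∧
      ReserveInv J R (J.galeShapleyFrom start) r ∧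
      ∀ a ∈ J.A, J.galeShapleyFrom start a = none → r a = [] := by
  let P : (V → Option V) × (V → List V) → Prop := fun st =>
    GSInv J start st.1 st.2 ∧ ReserveInv J R st.1 st.2
  have hP₀ : P (start, fun a => J.plist a) :=
    ⟨⟨hstart, fun _ => List.suffix_refl _, fun _ _ _ hb hnb _ => absurd hb hnb,
      fun _ _ _ h => Or.inl h, fun _ _ _ h => not_prefOver_self h⟩,
      fun a _ b h => Or.inl (hR.isMatching.2 a b h).1⟩
  have hstep : ∀ st st', P st → J.gsStep J.A.toList st = some st' → P st' := by
    rintro ⟨q, r⟩ st' ⟨h, hres⟩ hs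
    obtain ⟨a, b, rest, ha, hqa, hra, rfl⟩ := gsStep_eq_some hs
    rw [Finset.mem_toList] at ha
    exact ⟨h.propose hJ ha hqa hra, hres.propose hJ h hR ha hqa hra⟩
  obtain ⟨h, hres⟩ := gsRun_induction P hstep _ _ hP₀
  refine ⟨_, h, hres, fun a ha => ?_⟩
  exact gsStep_eq_none (gsStep_gsRun_eq_none _ _ (Nat.lt_succ_self _)) a
    (Finset.mem_toList.2 ha)

end Outcome

section GaleShapleyFrom

variable {V : Type*} [DecidableEq V] [Fintype V] {J : Inst V} {start R : V → Option V}
  {a b u v : V}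

theorem isMatching_galeShapleyFrom (hJ : J.IsMarriage) (hstart : J.IsMatching start) :
    J.IsMatching (J.galeShapleyFrom start) := by
  obtain ⟨r, h, -⟩ := exists_gsInv_galeShapleyFrom hJ hstart isReserve_none
  exact h.isMatching

theorem galeShapleyFrom_eq_start_of_prefOver (hJ : J.IsMarriage) (hstart : J.IsMatching start)
    (hu : u ∈ J.A) (hv : v ∈ J.plist u) (huv : J.PrefOver (J.galeShapleyFrom start) u v)
    (hvu : J.PrefOver (J.galeShapleyFrom start) v u) :
    ∃ w, J.galeShapleyFrom start u = some w ∧ start u = some w := by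
  obtain ⟨r, h, -, hterm⟩ := exists_gsInv_galeShapleyFrom hJ hstart isReserve_none
  exact h.eq_start_of_prefOver hJ hterm hu hv huv hvu

theorem noWorse_galeShapleyFrom_start (hJ : J.IsMarriage) (hstart : J.IsMatching start)
    (hb : b ∈ J.B) : J.NoWorse (J.galeShapleyFrom start) start b := by
  obtain ⟨r, h, -⟩ := exists_gsInv_galeShapleyFrom hJ hstart isReserve_none
  exact h.noWorse b hb

theorem noWorse_galeShapleyFrom_reserve (hJ : J.IsMarriage) (hstart : J.IsMatching start)
    (hR : J.IsReserve start R) (ha : a ∈ J.A) : J.NoWorse (J.galeShapleyFrom start) R a := by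
  obtain ⟨r, h, hres, hterm⟩ := exists_gsInv_galeShapleyFrom hJ hstart hR
  exact hres.noWorse hJ h hR hterm ha

end GaleShapleyFrom

section Transform

variable {V : Type*} {I : Inst V} {p start : V → Option V} {α : V → ℤ} {u v w x : V}

lemma eq_neg_of_eq_some (hedge : ∀ u v, p u = some v → α u + α v = 0) (h : p u = some w) :
    α w = -α u := by
  linarith [hedge u w h]

/-- `start` is the matching `M₁ ∩ (A₋₁ × B₁)`. -/
def IsStartMatching (I : Inst V) (p : V → Option V) (α : V → ℤ) (start : V → Option V) :
    Prop :=
  ∀ u w, start u = some w ↔ p u = some w ∧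
    ((u ∈ I.A ∧ α u = -1 ∧ w ∈ I.B ∧ α w = 1) ∨ (u ∈ I.B ∧ α u = 1 ∧ w ∈ I.A ∧ α w = -1))

lemma IsStartMatching.eq_of_mem_B (hs : I.IsStartMatching p α start) (hI : I.IsValid)
    (hp : I.IsMatching p) (hedge : ∀ u v, p u = some v → α u + α v = 0) (hb : v ∈ I.B)
    (hv : α v = 1) : start v = p v := by
  rcases hpv : p v with _ | w
  · rcases hsv : start v with _ | w
    · rfl
    · simp [((hs v w).1 hsv).1] at hpv
  · refine (hs v w).2 ⟨hpv, Or.inr ⟨hb, hv, ?_, ?_⟩⟩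
    · exact hI.isMarriage.mem_A_of_mem_B hb (hp.2 v w hpv).1
    · rw [eq_neg_of_eq_some hedge hpv, hv]

variable [DecidableEq V]

def nonzeroSupport (I : Inst V) (α : V → ℤ) : Finset V :=
  (I.A \ I.A.filter (fun u => α u = 0)) ∪ (I.B \ I.B.filter (fun u => α u = 0))

/-- `M₁ ∩ (A₁ × B₋₁)`. -/
def reserveMatching (I : Inst V) (p : V → Option V) (α : V → ℤ) : V → Option V := fun u =>
  if (u ∈ I.A ∧ α u = 1) ∨ (u ∈ I.B ∧ α u = -1) then p u else none

/-- `N = M₀ ∪ S`. -/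
noncomputable def transformed [Fintype V] (I : Inst V) (p : V → Option V) (α : V → ℤ)
    (start : V → Option V) : V → Option V :=
  fun v => if v ∈ I.A.filter (fun u => α u = 0) ∪ I.B.filter (fun u => α u = 0) then p v
    else (I.induce (nonzeroSupport I α)).galeShapleyFrom start v

lemma mem_nonzeroSupport_iff (hI : I.IsValid) : u ∈ nonzeroSupport I α ↔ α u ≠ 0 := by
  have := hI.2.2.2.1 u
  simp only [nonzeroSupport, Finset.mem_union, Finset.mem_sdiff, Finset.mem_filter]
  tauto

lemma mem_zero_iff (hI : I.IsValid) :
    u ∈ I.A.filter (fun u => α u = 0) ∪ I.B.filter (fun u => α u = 0) ↔ α u = 0 := by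
  have := hI.2.2.2.1 u
  simp only [Finset.mem_union, Finset.mem_filter]
  tauto

lemma IsStartMatching.isMatching (hs : I.IsStartMatching p α start) (hI : I.IsValid)
    (hp : I.IsMatching p) : (I.induce (nonzeroSupport I α)).IsMatching start := by
  refine ⟨fun u w h => ?_, fun u w h => ?_⟩ <;> rw [hs] at h
  · exact (hs w u).2 ⟨hp.1 u w h.1, by tauto⟩
  · rw [induce_adj_iff, mem_nonzeroSupport_iff hI, mem_nonzeroSupport_iff hI]
    refine ⟨?_, ?_, hp.2 u w h.1⟩ <;> omega

lemma reserveMatching_eq_some_iff : reserveMatching I p α u = some w ↔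
    p u = some w ∧ ((u ∈ I.A ∧ α u = 1) ∨ (u ∈ I.B ∧ α u = -1)) := by
  unfold reserveMatching
  split_ifs with h <;> simp [h]

lemma reserveMatching_of_mem_A (ha : u ∈ I.A) (hu : α u = 1) : reserveMatching I p α u = p u := by
  simp [reserveMatching, ha, hu]

lemma isMatching_reserveMatching (hI : I.IsValid) (hp : I.IsMatching p)
    (hedge : ∀ u v, p u = some v → α u + α v = 0) :
    (I.induce (nonzeroSupport I α)).IsMatching (reserveMatching I p α) := by
  refine ⟨fun u w h => ?_, fun u w h => ?_⟩ <;>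
    obtain ⟨hpu, hu⟩ := reserveMatching_eq_some_iff.1 h <;>
    have hw := eq_neg_of_eq_some hedge hpu
  · refine reserveMatching_eq_some_iff.2 ⟨hp.1 u w hpu, ?_⟩
    have hwpl := (hp.2 u w hpu).1
    rcases hu with ⟨ha, hu⟩ | ⟨hb, hu⟩
    · exact Or.inr ⟨hI.isMarriage.mem_B_of_mem_A ha hwpl, by omega⟩
    · exact Or.inl ⟨hI.isMarriage.mem_A_of_mem_B hb hwpl, by omega⟩
  · rw [induce_adj_iff, mem_nonzeroSupport_iff hI, mem_nonzeroSupport_iff hI]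
    refine ⟨?_, ?_, hp.2 u w hpu⟩ <;> omega

lemma prefSit_reserveMatching [Fintype V] (hI : I.IsValid) (hp : I.IsMatching p)
    (hwit : I.IsWitness p α) {a b x : V}
    (hb : b ∈ I.B) (hRb : reserveMatching I p α b = some a) (hx : x ∈ I.A) (hx0 : α x ≠ 0)
    (hpref : I.pref b x a) : I.PrefSit (reserveMatching I p α) x b := by
  obtain ⟨hpb, hbcond⟩ := reserveMatching_eq_some_iff.1 hRb
  have hb1 : α b = -1 :=
    (hbcond.resolve_left fun h => Finset.disjoint_left.1 hI.2.2.1 h.1 hb).2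
  have hadj : I.adj b x := hI.isMarriage.adj_of_mem hpref.1
  rcases hwit.1 x with hx0' | hx1 | hx1
  · exact absurd hx0' hx0
  · -- `x` is matched in `p` to a woman of value `-1` whom he prefers to `b`.
    have hbx : I.PrefOver p b x := (prefOver_iff_of_eq_some hpb).2 hpref
    have hxb : ¬ I.PrefOver p x b := fun hxb => by
      have := hwit.two_le_add hadj hbx hxb
      omega
    have hpxb : p x ≠ some b := fun h => by
      obtain rfl : x = a := Option.some_inj.1 ((hp.1 x b h).symm.trans hpb)
      exact pref_irrefl hpref
    obtain ⟨w, hpx, hpw⟩ := (prefSit_of_not_prefOver hp hadj.2 hpxb hxb).exists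
    exact (prefSit_iff_of_eq_some ((reserveMatching_of_mem_A hx hx1).trans hpx)).2 hpw
  · have := (prefSit_iff_of_eq_some hpb).1 (hwit.prefSit_of_add_neg hadj (by omega))
    exact absurd hpref (pref_asymm this)

lemma IsStartMatching.isReserve_reserveMatching [Fintype V] (hs : I.IsStartMatching p α start)
    (hI : I.IsValid) (hp : I.IsMatching p) (hwit : I.IsWitness p α)
    (hedge : ∀ u v, p u = some v → α u + α v = 0) :
    (I.induce (nonzeroSupport I α)).IsReserve start (reserveMatching I p α) := by
  refine ⟨isMatching_reserveMatching hI hp hedge, fun u w h => ?_, fun b hb a hRb x hx hpref => ?_⟩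
  · obtain ⟨-, hu⟩ := reserveMatching_eq_some_iff.1 h
    rcases hsu : start u with _ | w'
    · rfl
    exfalso
    have hdisj := Finset.disjoint_left.1 hI.2.2.1
    rcases hu with ⟨ha, hu⟩ | ⟨hb, hu⟩ <;>
      rcases ((hs u w').1 hsu).2 with ⟨ha', hu', -⟩ | ⟨hb', hu', -⟩
    · omega
    · exact hdisj ha hb'
    · exact hdisj ha' hb
    · omega
  · rw [induce_B, Finset.mem_inter] at hb
    rw [induce_A, Finset.mem_inter] at hx
    have hR := isMatching_reserveMatching hI hp hedge
    rw [induce_prefSit_iff hx.2 hb.2 fun w h => (hR.mem_of_induce h).2]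
    refine prefSit_reserveMatching hI hp hwit hb.1 hRb hx.1
      ((mem_nonzeroSupport_iff hI).1 hx.2) ?_
    exact (induce_pref_iff hb.2 hx.2 (hR.mem_of_induce hRb).2).1 hpref

lemma transformed_of_eq_zero [Fintype V] (hI : I.IsValid) (hu : α u = 0) :
    transformed I p α start u = p u :=
  if_pos ((mem_zero_iff hI).2 hu)

lemma transformed_of_ne_zero [Fintype V] (hI : I.IsValid) (hu : α u ≠ 0) :
    transformed I p α start u = (I.induce (nonzeroSupport I α)).galeShapleyFrom start u :=
  if_neg fun h => hu ((mem_zero_iff hI).1 h)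

lemma IsStartMatching.isMatching_transformed [Fintype V] (hs : I.IsStartMatching p α start)
    (hI : I.IsValid) (hp : I.IsMatching p) (hedge : ∀ u v, p u = some v → α u + α v = 0) :
    I.IsMatching (transformed I p α start) := by
  have hS := isMatching_galeShapleyFrom (hI.isMarriage.induce _) (hs.isMatching hI hp)
  refine ⟨fun u v h => ?_, fun u v h => ?_⟩ <;> by_cases hu : α u = 0
  · rw [transformed_of_eq_zero hI hu] at h
    rw [transformed_of_eq_zero hI (by linarith [hedge u v h])]
    exact hp.1 u v h
  · rw [transformed_of_ne_zero hI hu] at h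
    rw [transformed_of_ne_zero hI ((mem_nonzeroSupport_iff hI).1 (hS.mem_of_induce h).2)]
    exact hS.1 u v h
  · rw [transformed_of_eq_zero hI hu] at h
    exact hp.2 u v h
  · rw [transformed_of_ne_zero hI hu] at h
    exact (induce_adj_iff.1 (hS.2 u v h)).2.2

lemma IsStartMatching.noWorse_transformed [Fintype V] (hs : I.IsStartMatching p α start)
    (hI : I.IsValid) (hp : I.IsMatching p) (hwit : I.IsWitness p α)
    (hedge : ∀ u v, p u = some v → α u + α v = 0) (hx : 0 ≤ α x) :
    I.NoWorse (transformed I p α start) p x := by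
  have hJ := hI.isMarriage.induce (nonzeroSupport I α)
  have hstart := hs.isMatching hI hp
  have hS := isMatching_galeShapleyFrom hJ hstart
  rcases hwit.1 x with hx0 | hx1 | hx1
  · exact noWorse_of_eq (transformed_of_eq_zero hI hx0)
  swap
  · omega
  have hxs : x ∈ nonzeroSupport I α := (mem_nonzeroSupport_iff hI).2 (by omega)
  have hN := (transformed_of_ne_zero (p := p) (start := start) hI (by omega : α x ≠ 0)).symm
  rcases hI.2.2.2.1 x with ha | hb
  · have hR := hs.isReserve_reserveMatching hI hp hwit hedge
    have := noWorse_galeShapleyFrom_reserve hJ hstart hR (Finset.mem_inter.2 ⟨ha, hxs⟩)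
    exact (this.of_induce hxs (fun w h => (hS.mem_of_induce h).2)
      fun w h => (hR.isMatching.mem_of_induce h).2).congr hN (reserveMatching_of_mem_A ha hx1)
  · have := noWorse_galeShapleyFrom_start hJ hstart (Finset.mem_inter.2 ⟨hb, hxs⟩)
    exact (this.of_induce hxs (fun w h => (hS.mem_of_induce h).2)
      fun w h => (hstart.mem_of_induce h).2).congr hN
        (hs.eq_of_mem_B hI hp hedge hb hx1)

lemma IsStartMatching.transformed_eq_of_prefOver [Fintype V] (hs : I.IsStartMatching p α start)
    (hI : I.IsValid) (hp : I.IsMatching p) (hu : u ∈ I.A) (hu0 : α u ≠ 0) (hv0 : α v ≠ 0)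
    (hadj : I.adj u v) (huv : I.PrefOver (transformed I p α start) u v)
    (hvu : I.PrefOver (transformed I p α start) v u) :
    α u = -1 ∧ transformed I p α start u = p u := by
  have hJ := hI.isMarriage.induce (nonzeroSupport I α)
  have hstart := hs.isMatching hI hp
  have hS := isMatching_galeShapleyFrom hJ hstart
  have hus := (mem_nonzeroSupport_iff hI).2 hu0
  have hvs := (mem_nonzeroSupport_iff hI).2 hv0
  rw [transformed_of_ne_zero hI hu0]
  rw [prefOver_congr (transformed_of_ne_zero hI hu0),
    ← induce_prefOver_iff hus hvs fun w h => (hS.mem_of_induce h).2] at huv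
  rw [prefOver_congr (transformed_of_ne_zero hI hv0),
    ← induce_prefOver_iff hvs hus fun w h => (hS.mem_of_induce h).2] at hvu
  obtain ⟨w, hSu, hst⟩ := galeShapleyFrom_eq_start_of_prefOver hJ hstart
    (Finset.mem_inter.2 ⟨hu, hus⟩) (mem_induce_plist.2 ⟨hus, hadj.1, hvs⟩) huv hvu
  obtain ⟨hpu, hcond | hcond⟩ := (hs u w).1 hst
  · exact ⟨hcond.2.1, hSu.trans hpu.symm⟩
  · exact absurd hcond.1 (Finset.disjoint_left.1 hI.2.2.1 hu)

theorem IsStartMatching.stable_transformed [Fintype V] (hs : I.IsStartMatching p α start)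
    (hI : I.IsValid) (hp : I.IsMatching p) (hwit : I.IsWitness p α)
    (hedge : ∀ u v, p u = some v → α u + α v = 0) : I.Stable (I.transformed p α start) := by
  refine ⟨hs.isMatching_transformed hI hp hedge, ?_⟩
  rintro u v ⟨hadj, -, huv, hvu⟩
  wlog hu : u ∈ I.A generalizing u v
  · have hv := hI.isMarriage.mem_A_of_mem_B ((hI.2.2.2.1 u).resolve_left hu) hadj.1
    exact this v u ⟨hadj.2, hadj.1⟩ hvu huv hv
  set N := I.transformed p α start
  have hN : ∀ x, 0 ≤ α x → I.NoWorse N p x := fun x => hs.noWorse_transformed hI hp hwit hedge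
  have hneg : ∀ x y, I.adj x y → I.NoWorse N p x → α x + α y < 0 → ¬ I.PrefOver N x y :=
    fun x y hxy hx hs => hx.not_prefOver (hwit.prefSit_of_add_neg hxy hs)
  have hpos : I.NoWorse N p u → I.NoWorse N p v → 2 ≤ α u + α v := fun hu' hv' =>
    hwit.two_le_add hadj (hu'.prefOver hp hadj.1 huv) (hv'.prefOver hp hadj.2 hvu)
  have hstab : α u ≠ 0 → α v ≠ 0 → α u = -1 ∧ I.NoWorse N p u := fun hu0 hv0 =>
    (hs.transformed_eq_of_prefOver hI hp hu hu0 hv0 hadj huv hvu).imp_right noWorse_of_eq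
  rcases hwit.1 u with hu0 | hu1 | hu1 <;> rcases hwit.1 v with hv0 | hv1 | hv1
  · linarith [hpos (hN u hu0.ge) (hN v hv0.ge)]
  · linarith [hpos (hN u hu0.ge) (hN v (by omega))]
  · exact hneg u v hadj (hN u hu0.ge) (by omega) huv
  · linarith [hpos (hN u (by omega)) (hN v hv0.ge)]
  · linarith [(hstab (by omega) (by omega)).1]
  · linarith [(hstab (by omega) (by omega)).1]
  · exact hneg v u ⟨hadj.2, hadj.1⟩ (hN v hv0.ge) (by omega) hvu
  · linarith [hpos (hstab (by omega) (by omega)).2 (hN v (by omega))]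
  · exact hneg u v hadj (hstab (by omega) (by omega)).2 (by omega) huv

end Transform

end Inst

/-- Let `M` (= `p`) be a popular matching with a witness `α`
such that `α_a + α_b = 0` on every edge of `M`.  Split `M = M₀ ∪ M₁` according
to the `α`-values, let `G₁` be the subinstance induced on the vertices of
nonzero `α`-value, and let `S` be the stable matching of `G₁` computed by the
Gale–Shapley algorithm started from the matching `M₁ ∩ (A₋₁ × B₁)`.  Then
`N = M₀ ∪ S` is a stable matching of `G`. -/
theorem transformed_matching_stable
    {V : Type*} [DecidableEq V] [Fintype V] (I : Inst V) (hI : I.IsValid)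
    (p : V → Option V) (α : V → ℤ)
    (hpop : I.Popular p) (hwit : I.IsWitness p α)
    (hedge : ∀ u v, p u = some v → α u + α v = 0) :
    letI A0 : Finset V := I.A.filter (fun u => α u = 0)
    letI B0 : Finset V := I.B.filter (fun u => α u = 0)
    letI Am1 : Finset V := I.A.filter (fun u => α u = -1)
    letI B1 : Finset V := I.B.filter (fun u => α u = 1)
    letI G1 : Inst V := I.induce ((I.A \ A0) ∪ (I.B \ B0))
    letI start : V → Option V := fun v =>
      match p v with
      | some w =>
          if (v ∈ Am1 ∧ w ∈ B1) ∨ (v ∈ B1 ∧ w ∈ Am1) then some w else none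
      | none => none
    letI S : V → Option V := G1.galeShapleyFrom start
    letI N : V → Option V := fun v => if v ∈ A0 ∪ B0 then p v else S v
    I.Stable N := by
  refine Inst.IsStartMatching.stable_transformed (fun u w => ?_) hI hpop.1 hwit hedge
  split
  · rename_i w' hpu
    by_cases hw : w' = w
    · subst hw
      simp only [hpu, Finset.mem_filter]
      split_ifs <;> simp only [true_and] <;> tauto
    · simp [hpu, hw]
  · rename_i hpu
    simp [hpu]

end PopMatch
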